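/- arXiv:2602.06581 — 2 statements merged into one kernel-verified Lean document; each statement's English description precedes it below -/
import Mathlib

section
/- For s ∈ (0,1) and n ≥ 1, the function z ↦ (1 − cos z₁)/|z|^{n+2s} · |ln |z|| is integrable on ℝⁿ, where z₁ denotes the first coordinate of z. -/
/-!
Since `1 - cos z₁ ≤ min 2 (‖z‖² / 2)` and `|log r| ≤ r ^ (∓ε) / ε`, the integrand is
`O(‖z‖ ^ (-(n - 1 + s)))` near the origin (take `ε = 1 - s`) and `O(‖z‖ ^ (-(n + s)))` at infinity
(take `ε = s`). Both exponents lie on the integrable side of the dimension `n`.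
-/

open MeasureTheory Metric Real

lemma rpow_neg_le_mul_one_add_rpow_neg {x r α : ℝ} (hr : 0 < r) (hrx : r ≤ x) (hα : 0 ≤ α) :
    x ^ (-α) ≤ (1 + r⁻¹) ^ α * (1 + x) ^ (-α) := by
  have hx : 0 < x := hr.trans_le hrx
  have h : 1 + x ≤ (1 + r⁻¹) * x := by
    have : 1 ≤ r⁻¹ * x := by rw [inv_mul_eq_div]; exact (one_le_div hr).2 hrx
    linarith
  calc x ^ (-α) = (1 + r⁻¹) ^ α * ((1 + r⁻¹) * x) ^ (-α) := by
        rw [mul_rpow (by positivity) hx.le, ← mul_assoc, ← rpow_add (by positivity),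
          add_neg_cancel, rpow_zero, one_mul]
    _ ≤ (1 + r⁻¹) ^ α * (1 + x) ^ (-α) :=
        mul_le_mul_of_nonneg_left (rpow_le_rpow_of_nonpos (by positivity) h (by linarith))
          (by positivity)

section PowerDecay

variable {E F : Type*} [NormedAddCommGroup E] [NormedSpace ℝ E] [FiniteDimensional ℝ E]
  [MeasurableSpace E] [BorelSpace E] [NormedAddCommGroup F] {μ : Measure E} [μ.IsAddHaarMeasure]

lemma integrableOn_compl_ball_of_norm_le_rpow {f : E → F} {C α r : ℝ}
    (hα : (Module.finrank ℝ E : ℝ) < α) (hr : 0 < r)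
    (h_decay : ∀ᵐ x ∂μ.restrict (ball 0 r)ᶜ, ‖f x‖ ≤ C * ‖x‖ ^ (-α))
    (h_meas : AEStronglyMeasurable f μ) :
    IntegrableOn f (ball 0 r)ᶜ μ := by
  have hα0 : 0 ≤ α := (Nat.cast_nonneg _).trans hα.le
  refine Integrable.mono' ((integrable_one_add_norm hα).const_mul (|C| * (1 + r⁻¹) ^ α)).restrict
    h_meas.restrict ?_
  filter_upwards [h_decay, ae_restrict_mem measurableSet_ball.compl] with x hfx hx
  have hrx : r ≤ ‖x‖ := by simpa using hx
  calc ‖f x‖ ≤ C * ‖x‖ ^ (-α) := hfx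
    _ ≤ |C| * ‖x‖ ^ (-α) := by gcongr; exact le_abs_self C
    _ ≤ |C| * ((1 + r⁻¹) ^ α * (1 + ‖x‖) ^ (-α)) := by
        gcongr; exact rpow_neg_le_mul_one_add_rpow_neg hr hrx hα0
    _ = |C| * (1 + r⁻¹) ^ α * (1 + ‖x‖) ^ (-α) := by ring

lemma integrable_of_norm_le_rpow_of_norm_le_rpow (hd : 1 ≤ Module.finrank ℝ E) {f : E → F}
    {C₀ C₁ α β r : ℝ} (hα : α < Module.finrank ℝ E) (hβ : (Module.finrank ℝ E : ℝ) < β)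
    (hr : 0 < r) (h_zero : ∀ x, ‖x‖ < r → ‖f x‖ ≤ C₀ * ‖x‖ ^ (-α))
    (h_infty : ∀ x, r ≤ ‖x‖ → ‖f x‖ ≤ C₁ * ‖x‖ ^ (-β)) (h_meas : AEStronglyMeasurable f μ) :
    Integrable f μ := by
  rw [← integrableOn_univ, ← Set.union_compl_self (ball (0 : E) r)]
  refine (integrableOn_ball_of_norm_le_rpow (C := C₀) hd hα ?_ h_meas).union
    (integrableOn_compl_ball_of_norm_le_rpow (C := C₁) hβ hr ?_ h_meas)
  · filter_upwards [ae_restrict_mem measurableSet_ball] with x hx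
    exact h_zero x (mem_ball_zero_iff.1 hx)
  · filter_upwards [ae_restrict_mem measurableSet_ball.compl] with x hx
    exact h_infty x (by simpa using hx)

end PowerDecay

lemma abs_log_le_rpow_neg_div {x ε : ℝ} (hx₀ : 0 ≤ x) (hx₁ : x ≤ 1) (hε : 0 < ε) :
    |log x| ≤ x ^ (-ε) / ε := by
  rw [abs_of_nonpos (log_nonpos hx₀ hx₁), ← log_inv, rpow_neg hx₀, ← inv_rpow hx₀]
  exact log_le_rpow_div (inv_nonneg.2 hx₀) hε

lemma abs_log_le_rpow_div {x ε : ℝ} (hx : 1 ≤ x) (hε : 0 < ε) : |log x| ≤ x ^ ε / ε := by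
  rw [abs_of_nonneg (log_nonneg hx)]
  exact log_le_rpow_div (zero_le_one.trans hx) hε

lemma one_sub_cos_div_rpow_mul_abs_log_le_of_le_one {t ρ p ε : ℝ} (ht : |t| ≤ ρ) (hρ : ρ ≤ 1)
    (hε : 0 < ε) : (1 - cos t) / ρ ^ p * |log ρ| ≤ (2 * ε)⁻¹ * ρ ^ (-(p - 2 + ε)) := by
  rcases (abs_nonneg t).trans ht |>.eq_or_lt with rfl | hρ₀
  · simp only [log_zero, abs_zero, mul_zero]
    positivity
  have hcos : 1 - cos t ≤ ρ ^ 2 / 2 := by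
    have := sq_le_sq' (neg_le_of_abs_le ht) (le_of_abs_le ht)
    linarith [one_sub_sq_div_two_le_cos (x := t)]
  calc (1 - cos t) / ρ ^ p * |log ρ| ≤ ρ ^ 2 / 2 / ρ ^ p * (ρ ^ (-ε) / ε) := by
        gcongr
        exact abs_log_le_rpow_neg_div hρ₀.le hρ hε
    _ = (2 * ε)⁻¹ * ρ ^ (-(p - 2 + ε)) := by
        rw [show -(p - 2 + ε) = (2 : ℕ) - p - ε by push_cast; ring, rpow_sub hρ₀, rpow_sub hρ₀,
          rpow_natCast, rpow_neg hρ₀.le]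
        field_simp

lemma one_sub_cos_div_rpow_mul_abs_log_le_of_one_le {t ρ p ε : ℝ} (hρ : 1 ≤ ρ) (hε : 0 < ε) :
    (1 - cos t) / ρ ^ p * |log ρ| ≤ 2 / ε * ρ ^ (-(p - ε)) := by
  have hρ₀ : 0 < ρ := zero_lt_one.trans_le hρ
  calc (1 - cos t) / ρ ^ p * |log ρ| ≤ 2 / ρ ^ p * (ρ ^ ε / ε) := by
        gcongr
        · linarith [neg_one_le_cos t]
        · exact abs_log_le_rpow_div hρ hε
    _ = 2 / ε * ρ ^ (-(p - ε)) := by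
        rw [neg_sub, rpow_sub hρ₀]
        field_simp

theorem stmt_8 (n : ℕ) (hn : 0 < n) (s : ℝ) (hs : s ∈ Set.Ioo (0:ℝ) 1) :
    Integrable
      (fun z : EuclideanSpace ℝ (Fin n) =>
        (1 - Real.cos (z ⟨0, hn⟩)) / ‖z‖ ^ ((n:ℝ) + 2*s) * |Real.log ‖z‖|) := by
  obtain ⟨hs₀, hs₁⟩ := hs
  have hdim : Module.finrank ℝ (EuclideanSpace ℝ (Fin n)) = n := finrank_euclideanSpace_fin
  have h_nonneg (z : EuclideanSpace ℝ (Fin n)) :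
      0 ≤ (1 - cos (z ⟨0, hn⟩)) / ‖z‖ ^ ((n:ℝ) + 2*s) * |log ‖z‖| := by
    have := sub_nonneg.2 (cos_le_one (z ⟨0, hn⟩))
    positivity
  refine integrable_of_norm_le_rpow_of_norm_le_rpow (C₀ := (2 * (1 - s))⁻¹) (C₁ := 2 / s)
    (α := n + 2 * s - 2 + (1 - s)) (β := n + 2 * s - s) (r := 1) (by omega) (by rw [hdim]; linarith) (by rw [hdim]; linarith)
    one_pos (fun z hz => ?_) (fun z hz => ?_) (by fun_prop)
  · rw [norm_of_nonneg (h_nonneg z)]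
    exact one_sub_cos_div_rpow_mul_abs_log_le_of_le_one
      ((Real.norm_eq_abs _).symm.trans_le (PiLp.norm_apply_le z _)) hz.le (by linarith)
  · rw [norm_of_nonneg (h_nonneg z)]
    exact one_sub_cos_div_rpow_mul_abs_log_le_of_one_le hz hs₀
end

section
/- For s ∈ (0,1) and n > 2s, as Λ → ∞ one has ∫_{ℝⁿ} (|ξ|^{2s} ln|ξ|² − Λ)₋ dξ = (2|𝕊^{n-1}|/(n(n+2s))) (sΛ)^{1+n/(2s)} (ln Λ)^{-n/(2s)} (1 + o(1)), where (a)₋ = max(−a, 0). -/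
open MeasureTheory

/-- The surface measure `|𝕊^{n-1}|` of the unit sphere in `ℝⁿ`,
expressed as `n` times the volume of the unit ball. -/
noncomputable def sphereArea (n : ℕ) : ℝ :=
  (n : ℝ) * (volume (Metric.ball (0 : EuclideanSpace ℝ (Fin n)) 1)).toReal

/-!
In polar coordinates the integral is `|𝕊^{n-1}| ∫₀^∞ r^{n-1} (Λ - r^{2s} ln r²)₊ dr`. The
substitution `r = ρ t` with `ρ^{2s} = sΛ / ln Λ` turns the integrand into
`ρ^{n-1} Λ t^{n-1} (1 - t^{2s} (a_Λ + 2s ln t / ln Λ))₊` with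
`a_Λ = (ln (sΛ) - ln ln Λ) / ln Λ → 1`, and `ρ^n Λ = s⁻¹ (sΛ)^{1 + n/2s} (ln Λ)^{-n/2s}`.
The rescaled profile tends pointwise to `(1 - t^{2s})₊`; it is bounded by `2` because
`x e^{-x} ≤ 1`, and vanishes once `t^{2s} ≥ 2`, so by dominated convergence the remaining
integral tends to `∫₀¹ t^{n-1} (1 - t^{2s}) dt = 2s / (n (n + 2s))`.
-/

open Filter Set Real Topology

noncomputable def logProfile (p a L t : ℝ) : ℝ :=
  max (1 - t ^ p * (a + p * log t / L)) 0

lemma sphereArea_pos {n : ℕ} (hn : 0 < n) : 0 < sphereArea n :=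
  mul_pos (Nat.cast_pos.2 hn) <| ENNReal.toReal_pos
    (Metric.measure_ball_pos volume _ one_pos).ne' measure_ball_lt_top.ne

lemma integral_fun_norm_eq_sphereArea_mul {n : ℕ} (hn : 0 < n) (f : ℝ → ℝ) :
    ∫ ξ : EuclideanSpace ℝ (Fin n), f ‖ξ‖ =
      sphereArea n * ∫ r in Ioi (0:ℝ), r ^ (n - 1) * f r := by
  have : Nonempty (Fin n) := Fin.pos_iff_nonempty.mp hn
  rw [integral_fun_norm_addHaar volume f, finrank_euclideanSpace_fin, sphereArea, nsmul_eq_mul,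
    smul_eq_mul, mul_assoc]
  rfl

lemma integral_Ioi_pow_mul_comp_mul {n : ℕ} (hn : 0 < n) (f : ℝ → ℝ) {ρ : ℝ} (hρ : 0 < ρ) :
    ∫ r in Ioi (0:ℝ), r ^ (n - 1) * f r = ρ ^ n * ∫ t in Ioi (0:ℝ), t ^ (n - 1) * f (ρ * t) := by
  have h := integral_comp_mul_left_Ioi (fun r => r ^ (n - 1) * f r) 0 hρ
  simp only [mul_zero, smul_eq_mul, mul_pow, mul_assoc] at h
  rw [integral_const_mul, eq_inv_mul_iff_mul_eq₀ hρ.ne'] at h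
  rw [← h, ← mul_assoc, ← pow_succ', Nat.sub_add_cancel hn]

lemma integral_pow_mul_max_one_sub_rpow {n : ℕ} (hn : 0 < n) {p : ℝ} (hp : 0 < p) :
    ∫ t in Ioi (0:ℝ), t ^ (n - 1) * max (1 - t ^ p) 0 = p / (n * (n + p)) := by
  have hvanish : ∀ t ∈ Ioi (0:ℝ) \ Ioc 0 1, t ^ (n - 1) * max (1 - t ^ p) 0 = 0 := by
    rintro t ⟨ht0, ht1⟩
    have : 1 ≤ t ^ p := one_le_rpow (not_le.1 fun h => ht1 ⟨ht0, h⟩).le hp.le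
    rw [max_eq_right (by linarith), mul_zero]
  have hpoly : ∀ t ∈ Ioc (0:ℝ) 1,
      t ^ (n - 1) * max (1 - t ^ p) 0 = t ^ ((n:ℝ) - 1) - t ^ ((n:ℝ) - 1 + p) := by
    rintro t ⟨ht0, ht1⟩
    rw [max_eq_left (by linarith [rpow_le_one ht0.le ht1 hp.le]), rpow_add ht0,
      ← rpow_natCast, Nat.cast_sub hn, Nat.cast_one]
    ring
  have hn1 : (-1:ℝ) < n - 1 := by linarith [(Nat.cast_pos.2 hn : (0:ℝ) < n)]
  have hnp : (-1:ℝ) < n - 1 + p := by linarith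
  rw [setIntegral_eq_of_subset_of_forall_sdiff_eq_zero measurableSet_Ioi Ioc_subset_Ioi_self
    hvanish, setIntegral_congr_fun measurableSet_Ioc hpoly,
    ← intervalIntegral.integral_of_le zero_le_one,
    intervalIntegral.integral_sub (intervalIntegral.intervalIntegrable_rpow' hn1)
      (intervalIntegral.intervalIntegrable_rpow' hnp),
    integral_rpow (Or.inl hn1), integral_rpow (Or.inl hnp), sub_add_cancel,
    show (n:ℝ) - 1 + p + 1 = n + p by ring, one_rpow, one_rpow,
    zero_rpow (by positivity), zero_rpow (by positivity)]
  have : (0:ℝ) < n := Nat.cast_pos.2 hn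
  field_simp
  ring

lemma neg_rpow_mul_log_le_one (p : ℝ) {t : ℝ} (ht : 0 < t) : -(t ^ p * (p * log t)) ≤ 1 := by
  rw [rpow_def_of_pos ht, mul_comm (log t) p]
  set u := p * log t
  calc -(exp u * u) = -u * exp u := by ring
    _ ≤ exp (-u) * exp u := by gcongr; linarith [add_one_le_exp (-u)]
    _ = 1 := by rw [← exp_add, neg_add_cancel, exp_zero]

lemma logProfile_le_two {p a L t : ℝ} (ha : 0 ≤ a) (hL : 1 ≤ L) (ht : 0 < t) :
    logProfile p a L t ≤ 2 := by
  have hlog : -(t ^ p * (p * log t)) / L ≤ 1 :=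
    div_le_one_of_le₀ ((neg_rpow_mul_log_le_one p ht).trans hL) (by linarith)
  have : 0 ≤ t ^ p * a := mul_nonneg (rpow_nonneg ht.le p) ha
  refine max_le ?_ (by norm_num)
  calc 1 - t ^ p * (a + p * log t / L) = 1 - t ^ p * a + -(t ^ p * (p * log t)) / L := by ring
    _ ≤ 2 := by linarith

lemma logProfile_eq_zero {p a L t : ℝ} (hp : 0 < p) (ha : 1 / 2 ≤ a) (hL : 0 < L)
    (ht : 2 ^ p⁻¹ ≤ t) : logProfile p a L t = 0 := by
  have ht1 : 1 ≤ t := (one_le_rpow one_le_two (inv_nonneg.2 hp.le)).trans ht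
  have htp : 2 ≤ t ^ p := by
    simpa [← rpow_mul zero_le_two, inv_mul_cancel₀ hp.ne'] using
      rpow_le_rpow (by positivity) ht hp.le
  have : 0 ≤ p * log t / L := div_nonneg (mul_nonneg hp.le (log_nonneg ht1)) hL.le
  refine max_eq_right ?_
  nlinarith

lemma tendsto_logProfile {ι : Type*} {l : Filter ι} {a L : ι → ℝ} (ha : Tendsto a l (𝓝 1))
    (hL : Tendsto L l atTop) (p t : ℝ) :
    Tendsto (fun i => logProfile p (a i) (L i) t) l (𝓝 (max (1 - t ^ p) 0)) := by
  have h := ha.add (tendsto_const_nhds (x := p * log t) |>.div_atTop hL)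
  rw [add_zero] at h
  have := ((h.const_mul (t ^ p)).const_sub 1).max (tendsto_const_nhds (x := (0:ℝ)))
  rwa [mul_one] at this

lemma tendsto_log_mul_sub_log_log_div_log {c : ℝ} (hc : c ≠ 0) :
    Tendsto (fun x => (log (c * x) - log (log x)) / log x) atTop (𝓝 1) := by
  have hlog : Tendsto (fun x => log c / log x - log (log x) / log x + 1) atTop (𝓝 1) := by
    have h1 := (tendsto_const_nhds (x := log c)).div_atTop tendsto_log_atTop
    have h2 := (isLittleO_log_id_atTop.comp_tendsto tendsto_log_atTop).tendsto_div_nhds_zero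
    simpa using (h1.sub h2).add_const 1
  refine hlog.congr' ?_
  filter_upwards [eventually_gt_atTop 1] with x hx
  rw [log_mul hc (by linarith)]
  field_simp [(log_pos hx).ne']
  ring

lemma tendsto_integral_logProfile {ι : Type*} {l : Filter ι} [l.IsCountablyGenerated]
    {a L : ι → ℝ} (ha : Tendsto a l (𝓝 1)) (hL : Tendsto L l atTop) {n : ℕ} (hn : 0 < n)
    {p : ℝ} (hp : 0 < p) :
    Tendsto (fun i => ∫ t in Ioi (0:ℝ), t ^ (n - 1) * logProfile p (a i) (L i) t) l
      (𝓝 (p / (n * (n + p)))) := by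
  rw [← integral_pow_mul_max_one_sub_rpow hn hp]
  refine tendsto_integral_filter_of_dominated_convergence
    ((Ioc 0 (2 ^ p⁻¹)).indicator fun t => 2 * t ^ (n - 1)) (.of_forall fun i => ?_) ?_ ?_ ?_
  · unfold logProfile
    fun_prop
  · filter_upwards [ha.eventually_const_le (by norm_num : (1 / 2 : ℝ) < 1),
      hL.eventually_ge_atTop 1] with i hai hLi
    refine (ae_restrict_iff' measurableSet_Ioi).2 (.of_forall fun t (ht : 0 < t) => ?_)
    have hG : 0 ≤ logProfile p (a i) (L i) t := le_max_right _ _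
    rw [Real.norm_eq_abs, abs_of_nonneg (mul_nonneg (pow_nonneg ht.le _) hG)]
    by_cases htT : t ≤ 2 ^ p⁻¹
    · rw [indicator_of_mem (show t ∈ Ioc 0 (2 ^ p⁻¹) from ⟨ht, htT⟩), mul_comm 2]
      gcongr
      exact logProfile_le_two (by linarith) hLi ht
    · rw [indicator_of_notMem fun h => htT h.2,
        logProfile_eq_zero hp hai (by linarith) (not_le.1 htT).le, mul_zero]
  · exact ((by fun_prop : Continuous fun t : ℝ => 2 * t ^ (n - 1)).integrableOn_Ioc
      |>.integrable_indicator measurableSet_Ioc).restrict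
  · exact .of_forall fun t => (tendsto_logProfile ha hL p t).const_mul _

lemma max_sub_rpow_mul_log_sq_scaled {s Λ t : ℝ} (hs : 0 < s) (hΛ : 1 < Λ) (ht : 0 < t) :
    max (Λ - ((s * Λ / log Λ) ^ (2 * s)⁻¹ * t) ^ (2 * s) *
        log (((s * Λ / log Λ) ^ (2 * s)⁻¹ * t) ^ 2)) 0 =
      Λ * logProfile (2 * s) ((log (s * Λ) - log (log Λ)) / log Λ) (log Λ) t := by
  have hL : 0 < log Λ := log_pos hΛ
  have hq : 0 < s * Λ / log Λ := by positivity
  have hρ : 0 < (s * Λ / log Λ) ^ (2 * s)⁻¹ := rpow_pos_of_pos hq _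
  have hpow : ((s * Λ / log Λ) ^ (2 * s)⁻¹ * t) ^ (2 * s) = s * Λ / log Λ * t ^ (2 * s) := by
    rw [mul_rpow hρ.le ht.le, ← rpow_mul hq.le, inv_mul_cancel₀ (by positivity), rpow_one]
  have hlog : log (((s * Λ / log Λ) ^ (2 * s)⁻¹ * t) ^ 2) =
      (log (s * Λ) - log (log Λ)) / s + 2 * log t := by
    rw [log_pow, log_mul hρ.ne' ht.ne', log_rpow hq, log_div (by positivity) hL.ne']
    field_simp
    ring
  rw [hpow, hlog, logProfile, mul_max_of_nonneg _ _ (by linarith : 0 ≤ Λ), mul_zero]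
  congr 1
  field_simp

lemma integral_max_sub_rpow_mul_log_sq {n : ℕ} (hn : 0 < n) {s Λ : ℝ} (hs : 0 < s) (hΛ : 1 < Λ) :
    ∫ ξ : EuclideanSpace ℝ (Fin n), max (Λ - ‖ξ‖ ^ (2 * s) * log (‖ξ‖ ^ 2)) 0 =
      sphereArea n * (s⁻¹ * (s * Λ) ^ (1 + (n:ℝ) / (2 * s)) * log Λ ^ (-((n:ℝ) / (2 * s)))) *
        ∫ t in Ioi (0:ℝ), t ^ (n - 1) *
          logProfile (2 * s) ((log (s * Λ) - log (log Λ)) / log Λ) (log Λ) t := by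
  have hL : 0 < log Λ := log_pos hΛ
  have hq : 0 < s * Λ / log Λ := by positivity
  have hρn : ((s * Λ / log Λ) ^ (2 * s)⁻¹) ^ n * Λ =
      s⁻¹ * (s * Λ) ^ (1 + (n:ℝ) / (2 * s)) * log Λ ^ (-((n:ℝ) / (2 * s))) := by
    rw [← rpow_natCast, ← rpow_mul hq.le, div_rpow (by positivity) hL.le, rpow_neg hL.le,
      rpow_add (by positivity), rpow_one, inv_mul_eq_div]
    field_simp
  rw [integral_fun_norm_eq_sphereArea_mul hn fun r => max (Λ - r ^ (2 * s) * log (r ^ 2)) 0,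
    integral_Ioi_pow_mul_comp_mul hn _ (rpow_pos_of_pos hq (2 * s)⁻¹),
    setIntegral_congr_fun measurableSet_Ioi fun t ht => by
      rw [max_sub_rpow_mul_log_sq_scaled hs hΛ ht, mul_left_comm],
    integral_const_mul, ← hρn]
  ring

theorem stmt_19_general (n : ℕ) (hn : 0 < n) (s : ℝ) (hs : s ∈ Set.Ioo (0:ℝ) 1) :
    Filter.Tendsto
      (fun Λ : ℝ =>
        (∫ ξ : EuclideanSpace ℝ (Fin n), max (Λ - ‖ξ‖ ^ (2*s) * Real.log (‖ξ‖^2)) 0) /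
          ((2 * sphereArea n / ((n:ℝ)*((n:ℝ) + 2*s))) * (s*Λ) ^ (1 + (n:ℝ)/(2*s)) *
            (Real.log Λ) ^ (-((n:ℝ)/(2*s)))))
      Filter.atTop (nhds 1) := by
  have hs0 : 0 < s := hs.1
  have hn0 : (0:ℝ) < n := Nat.cast_pos.2 hn
  have hK := (tendsto_integral_logProfile (tendsto_log_mul_sub_log_log_div_log hs0.ne')
    tendsto_log_atTop hn (by positivity : 0 < 2 * s)).const_mul ((n:ℝ) * (n + 2 * s) / (2 * s))
  rw [show (n:ℝ) * (n + 2 * s) / (2 * s) * (2 * s / (n * (n + 2 * s))) = 1 by field_simp] at hK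
  refine hK.congr' ?_
  filter_upwards [eventually_gt_atTop 1] with Λ hΛ
  have hA := sphereArea_pos hn
  have hP : 0 < (s * Λ) ^ (1 + (n:ℝ) / (2 * s)) := rpow_pos_of_pos (by positivity) _
  have hQ : 0 < log Λ ^ (-((n:ℝ) / (2 * s))) := rpow_pos_of_pos (log_pos hΛ) _
  rw [integral_max_sub_rpow_mul_log_sq hn hs0 hΛ]
  field_simp

theorem stmt_19 (n : ℕ) (hn : 0 < n) (s : ℝ) (hs : s ∈ Set.Ioo (0:ℝ) 1) (hns : 2*s < n) :
    Filter.Tendsto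
      (fun Λ : ℝ =>
        (∫ ξ : EuclideanSpace ℝ (Fin n), max (Λ - ‖ξ‖ ^ (2*s) * Real.log (‖ξ‖^2)) 0) /
          ((2 * sphereArea n / ((n:ℝ)*((n:ℝ) + 2*s))) * (s*Λ) ^ (1 + (n:ℝ)/(2*s)) *
            (Real.log Λ) ^ (-((n:ℝ)/(2*s)))))
      Filter.atTop (nhds 1) :=
  stmt_19_general n hn s hs
end
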